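/- arXiv:2508.00070 — 3 statements merged into one kernel-verified Lean document; each statement's English description precedes it below -/
import Mathlib

section
/- For τ ≠ 0, the discriminant of the polynomial 𝒟₂⁺(χ,τ,λ) := (χ - τ²λ)²λ + 8, viewed as a cubic in λ, equals -32τ⁶(54τ² + χ³) with the standard cubic discriminant convention; in particular it is strictly negative whenever 54τ² + χ³ > 0. -/
/-- For `τ ≠ 0`, the cubic-in-`λ` polynomial `𝒟₂⁺(χ,τ,λ) = (χ - τ²λ)²λ + 8` has
discriminant `-32τ⁶(54τ² + χ³)` (standard cubic discriminant convention); in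
particular the discriminant is strictly negative whenever `54τ² + χ³ > 0`. -/
theorem stmt4 (χ τ : ℝ) (hτ : τ ≠ 0) :
    let a : ℝ := τ ^ 4
    let b : ℝ := -2 * χ * τ ^ 2
    let c : ℝ := χ ^ 2
    let d : ℝ := 8
    let Δ : ℝ := 18 * a * b * c * d - 4 * b ^ 3 * d + b ^ 2 * c ^ 2
        - 4 * a * c ^ 3 - 27 * a ^ 2 * d ^ 2
    (∀ lam : ℝ, (χ - τ ^ 2 * lam) ^ 2 * lam + 8
        = a * lam ^ 3 + b * lam ^ 2 + c * lam + d) ∧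
    Δ = -32 * τ ^ 6 * (54 * τ ^ 2 + χ ^ 3) ∧
    (0 < 54 * τ ^ 2 + χ ^ 3 → Δ < 0) := by
  intro a b c d Δ
  have hΔ : Δ = -32 * τ ^ 6 * (54 * τ ^ 2 + χ ^ 3) := by
    simp only [Δ, a, b, c, d]; ring
  refine ⟨fun lam => by simp only [a, b, c, d]; ring, hΔ, fun h => ?_⟩
  rw [hΔ]
  have h6 : 0 < τ ^ 6 := by positivity
  nlinarith
end

section
/- Let ξ ∈ ℂ with Im(ξ) > 0, C ∈ ℂ, and define X⁺ := (1/(4Im(ξ)² + |C|²))·[[0, 4Im(ξ)²C],[0, 2i·Im(ξ)|C|²]] and Z⁺ := σ₂(X⁺)*σ₂. Then the rational matrix function R(z) := I + X⁺/(z-ξ) + Z⁺/(z-ξ*) satisfies: R(z)(I - p(z)N⁺) is analytic at z = ξ for any function p analytic near ξ except a simple pole at ξ with residue C, where N⁺ = [[0,1],[0,0]]. -/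
open scoped Topology

/-!
Write `w = ξ*` and `p = C/(z - ξ) + q` with `q` analytic at `ξ`. Since the first column of `X⁺`
vanishes, `X⁺ N⁺ = 0`, so the only singular terms of `R(z)(I - p(z)N⁺)` at `ξ` are
`(X⁺ - C N⁺)/(z - ξ) - C Z⁺N⁺/((z - ξ)(z - w))`. Its residue vanishes exactly when
`X⁺ = C (N⁺ + Z⁺N⁺/(ξ - w))`, and then the singular part collapses to `C Z⁺N⁺/((ξ - w)(z - w))`.
For the given `X⁺` this residue condition is a direct computation, using
`ξ - w = 2i Im ξ` and `C C* = |C|²`.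
-/

section Algebra

variable {𝕜 A : Type*} [Field 𝕜] [Ring A] [Algebra 𝕜 A]

theorem mul_one_sub_smul_eq_of_residue {X Z N : A} {ξ w z C q : 𝕜} (hz : z ≠ ξ) (hzw : z ≠ w)
    (hw : ξ ≠ w) (hXN : X * N = 0) (hX : X = C • (N + (ξ - w)⁻¹ • (Z * N))) :
    (1 + (z - ξ)⁻¹ • X + (z - w)⁻¹ • Z) * (1 - (C / (z - ξ) + q) • N) =
      1 + (z - w)⁻¹ • Z - q • N + ((C / (ξ - w) - q) * (z - w)⁻¹) • (Z * N) := by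
  have hcoef : (z - ξ)⁻¹ * C * (ξ - w)⁻¹ - C / (z - ξ) * (z - w)⁻¹ =
      C / (ξ - w) * (z - w)⁻¹ := by
    field_simp [sub_ne_zero.2 hz, sub_ne_zero.2 hzw, sub_ne_zero.2 hw]
    ring
  simp only [mul_sub, add_mul, mul_one, one_mul, smul_mul_assoc, mul_smul_comm, hXN, smul_zero]
  rw [hX]
  linear_combination (norm := module) hcoef • (Z * N)

end Algebra

theorem exists_analyticAt_mul_one_sub_smul {n : Type*} [Fintype n] [DecidableEq n]
    {X Z N : Matrix n n ℂ} {ξ w C : ℂ} {p : ℂ → ℂ} (hw : ξ ≠ w) (hXN : X * N = 0)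
    (hX : X = C • (N + (ξ - w)⁻¹ • (Z * N)))
    (hp : ∃ q : ℂ → ℂ, AnalyticAt ℂ q ξ ∧ ∀ᶠ z in 𝓝[≠] ξ, p z = C / (z - ξ) + q z) :
    ∃ G : ℂ → Matrix n n ℂ, (∀ i j, AnalyticAt ℂ (fun z => G z i j) ξ) ∧
      ∀ᶠ z in 𝓝[≠] ξ, (1 + (z - ξ)⁻¹ • X + (z - w)⁻¹ • Z) * (1 - p z • N) = G z := by
  obtain ⟨q, hq, hpq⟩ := hp
  refine ⟨fun z => 1 + (z - w)⁻¹ • Z - q z • N + ((C / (ξ - w) - q z) * (z - w)⁻¹) • (Z * N),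
    fun i j => ?_, ?_⟩
  · have hinv : AnalyticAt ℂ (fun z => (z - w)⁻¹) ξ :=
      (analyticAt_id.sub analyticAt_const).inv (sub_ne_zero.2 hw)
    simp only [Matrix.add_apply, Matrix.sub_apply, Matrix.smul_apply, smul_eq_mul]
    fun_prop
  · have hzw : ∀ᶠ z in 𝓝[≠] ξ, z ≠ w :=
      eventually_nhdsWithin_of_eventually_nhds (eventually_ne_nhds hw)
    filter_upwards [hpq, hzw, self_mem_nhdsWithin] with z hpz hzw hz
    rw [hpz]
    exact mul_one_sub_smul_eq_of_residue hz hzw hw hXN hX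

noncomputable def residueMatrix (s : ℝ) (C : ℂ) : Matrix (Fin 2) (Fin 2) ℂ :=
  (1 / (4 * (s : ℂ) ^ 2 + (‖C‖ : ℂ) ^ 2)) •
    !![0, 4 * (s : ℂ) ^ 2 * C; 0, 2 * Complex.I * (s : ℂ) * (‖C‖ : ℂ) ^ 2]

theorem residueMatrix_mul_nilpotent (s : ℝ) (C : ℂ) :
    residueMatrix s C * !![0, 1; 0, 0] = 0 := by
  ext i j
  fin_cases i <;> fin_cases j <;> simp [residueMatrix, Matrix.mul_apply]

theorem pauliY_mul_map_conj_mul_pauliY_mul_nilpotent (M : Matrix (Fin 2) (Fin 2) ℂ) :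
    !![0, -Complex.I; Complex.I, 0] * M.map (starRingEnd ℂ) * !![0, -Complex.I; Complex.I, 0] *
        !![0, 1; 0, 0] = !![0, starRingEnd ℂ (M 1 1); 0, -starRingEnd ℂ (M 0 1)] := by
  rw [Matrix.eta_fin_two (M.map _)]
  simp [mul_right_comm _ _ Complex.I]

theorem residueMatrix_eq_smul (s : ℝ) (hs : s ≠ 0) (C : ℂ) :
    residueMatrix s C = C • (!![0, 1; 0, 0] + (2 * s * Complex.I)⁻¹ •
      (!![0, -Complex.I; Complex.I, 0] * (residueMatrix s C).map (starRingEnd ℂ) *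
        !![0, -Complex.I; Complex.I, 0] * !![0, 1; 0, 0])) := by
  rw [pauliY_mul_map_conj_mul_pauliY_mul_nilpotent]
  have hs' : (s : ℂ) ≠ 0 := by exact_mod_cast hs
  have hden : 4 * (s : ℂ) ^ 2 + (‖C‖ : ℂ) ^ 2 ≠ 0 := by
    exact_mod_cast (by positivity : (0 : ℝ) < 4 * s ^ 2 + ‖C‖ ^ 2).ne'
  ext i j
  fin_cases i <;> fin_cases j <;> simp [residueMatrix, map_ofNat] <;> field_simp
  · linear_combination (-C * (‖C‖ : ℂ) ^ 2) * Complex.I_sq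
  · linear_combination -4 * Complex.mul_conj' C

/-- With `X⁺` and `Z⁺ = σ₂ (X⁺)* σ₂` as defined, the rational matrix function
`R(z) = I + X⁺/(z-ξ) + Z⁺/(z-ξ*)` has the property that `R(z)(I - p(z)N⁺)` is
analytic at `z = ξ` for any function `p` analytic near `ξ` except for a simple
pole at `ξ` with residue `C`. -/
theorem stmt16 (ξ C : ℂ) (hξ : 0 < ξ.im) (p : ℂ → ℂ)
    (hp : ∃ q : ℂ → ℂ, AnalyticAt ℂ q ξ ∧
        ∀ᶠ z in 𝓝[≠] ξ, p z = C / (z - ξ) + q z) :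
    let Nplus : Matrix (Fin 2) (Fin 2) ℂ := !![0, 1; 0, 0]
    let σ₂ : Matrix (Fin 2) (Fin 2) ℂ := !![0, -Complex.I; Complex.I, 0]
    let Xp : Matrix (Fin 2) (Fin 2) ℂ :=
      (1 / (4 * (ξ.im : ℂ) ^ 2 + (‖C‖ : ℂ) ^ 2)) •
        !![0, 4 * (ξ.im : ℂ) ^ 2 * C;
           0, 2 * Complex.I * (ξ.im : ℂ) * (‖C‖ : ℂ) ^ 2]
    let Zp : Matrix (Fin 2) (Fin 2) ℂ := σ₂ * Xp.map (starRingEnd ℂ) * σ₂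
    let R : ℂ → Matrix (Fin 2) (Fin 2) ℂ := fun z =>
      1 + (z - ξ)⁻¹ • Xp + (z - (starRingEnd ℂ) ξ)⁻¹ • Zp
    ∃ G : ℂ → Matrix (Fin 2) (Fin 2) ℂ,
      (∀ i j, AnalyticAt ℂ (fun z => G z i j) ξ) ∧
      ∀ᶠ z in 𝓝[≠] ξ, R z * (1 - p z • Nplus) = G z := by
  intro Nplus σ₂ Xp Zp R
  have hw : ξ ≠ starRingEnd ℂ ξ := fun h => hξ.ne' (Complex.conj_eq_iff_im.1 h.symm)
  have hsub : ξ - starRingEnd ℂ ξ = 2 * (ξ.im : ℂ) * Complex.I := by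
    rw [Complex.sub_conj]
    push_cast
    ring
  refine exists_analyticAt_mul_one_sub_smul hw (residueMatrix_mul_nilpotent ξ.im C) ?_ hp
  rw [hsub]
  exact residueMatrix_eq_smul ξ.im hξ.ne' C
end

section
/- The descending Landen transformation implies: for m ∈ (0,1), setting m₁ := 4√m/(1+√m)², one has K(1-m)/K(m) = 2·K(1-m₁)/K(m₁), where K denotes the complete elliptic integral of the first kind K(m) = ∫₀¹ dx/(√(1-x²)√(1-mx²)). -/
/-!
The substitution `x = (1 + k) t / (1 + k t²)` maps `(0, 1)` monotonically onto itself and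
transforms the integrand of `K(4k/(1+k)²)` into `(1 + k)` times that of `K(k²)`; this is the
Landen transformation `K(4k/(1+k)²) = (1 + k) K(k²)`, valid for `-1 < k < 1`.
Applying it once with `k = √m` and once with `k = (1 - √m)/(1 + √m)`, for which
`4k/(1+k)² = 1 - m`, `k² = 1 - m₁` and `1 + k = 2/(1 + √m)`, gives
`K(m₁) = (1 + √m) K(m)` and `K(1 - m) = 2 K(1 - m₁)/(1 + √m)`; dividing yields the claim.
-/

/-- The complete elliptic integral of the first kind, `K(m) = ∫₀¹ dx/(√(1-x²)√(1-mx²))`. -/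
noncomputable def ellipticK (m : ℝ) : ℝ :=
  ∫ x in (0 : ℝ)..1, 1 / (Real.sqrt (1 - x ^ 2) * Real.sqrt (1 - m * x ^ 2))

open MeasureTheory Set Real

noncomputable def ellipticKIntegrand (m x : ℝ) : ℝ :=
  1 / (√(1 - x ^ 2) * √(1 - m * x ^ 2))

lemma ellipticK_eq_integral_Ioo (m : ℝ) :
    ellipticK m = ∫ x in Ioo (0 : ℝ) 1, ellipticKIntegrand m x := by
  rw [ellipticK, intervalIntegral.integral_of_le zero_le_one, integral_Ioc_eq_integral_Ioo]
  rfl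

section Landen

noncomputable def landenMap (k t : ℝ) : ℝ := (1 + k) * t / (1 + k * t ^ 2)

noncomputable def landenMapDeriv (k t : ℝ) : ℝ :=
  (1 + k) * (1 - k * t ^ 2) / (1 + k * t ^ 2) ^ 2

variable {k t : ℝ}

lemma one_add_mul_sq_pos (hk : -1 < k) (ht : t ∈ Icc (0 : ℝ) 1) : 0 < 1 + k * t ^ 2 := by
  nlinarith [ht.1, ht.2, mul_nonneg (sq_nonneg t) (by linarith : (0 : ℝ) ≤ 1 + k)]

lemma one_sub_mul_sq_pos (hk : k < 1) (ht : t ∈ Ioo (0 : ℝ) 1) : 0 < 1 - k * t ^ 2 := by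
  nlinarith [ht.1, ht.2, mul_nonneg (sq_nonneg t) (by linarith : (0 : ℝ) ≤ 1 - k)]

lemma hasDerivAt_landenMap (hk : -1 < k) (ht : t ∈ Icc (0 : ℝ) 1) :
    HasDerivAt (landenMap k) (landenMapDeriv k t) t := by
  have hden := one_add_mul_sq_pos hk ht
  have hnum : HasDerivAt (fun t : ℝ => (1 + k) * t) (1 + k) t := by
    simpa using (hasDerivAt_id t).const_mul (1 + k)
  have hden' : HasDerivAt (fun t : ℝ => 1 + k * t ^ 2) (k * (2 * t)) t := by
    simpa using ((hasDerivAt_pow 2 t).const_mul k).const_add 1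
  refine (hnum.div hden' hden.ne').congr_deriv ?_
  rw [landenMapDeriv]
  field_simp
  ring

lemma landenMapDeriv_pos (hk : -1 < k) (hk' : k < 1) (ht : t ∈ Ioo (0 : ℝ) 1) :
    0 < landenMapDeriv k t := by
  have hden := one_add_mul_sq_pos hk (Ioo_subset_Icc_self ht)
  exact div_pos (mul_pos (by linarith) (one_sub_mul_sq_pos hk' ht)) (pow_pos hden 2)

lemma landenMap_zero : landenMap k 0 = 0 := by simp [landenMap]

lemma landenMap_one (hk : -1 < k) : landenMap k 1 = 1 := by
  rw [landenMap, div_eq_one_iff_eq (by linarith)]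
  ring

lemma mapsTo_landenMap (hk : -1 < k) (hk' : k < 1) :
    MapsTo (landenMap k) (Ioo 0 1) (Ioo 0 1) := by
  intro t ht
  have hden := one_add_mul_sq_pos hk (Ioo_subset_Icc_self ht)
  refine ⟨div_pos (by nlinarith [ht.1]) hden, (div_lt_one hden).2 ?_⟩
  -- `1 + k t² - (1 + k) t = (1 - t) (1 - k t)`
  have hkt : k * t < 1 := by nlinarith [ht.1, ht.2, mul_pos ht.1 (sub_pos.2 hk')]
  nlinarith [mul_pos (sub_pos.2 ht.2) (sub_pos.2 hkt)]

lemma injOn_landenMap (hk : -1 < k) (hk' : k < 1) : InjOn (landenMap k) (Ioo 0 1) := by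
  intro s hs t ht hst
  have hs' := one_add_mul_sq_pos hk (Ioo_subset_Icc_self hs)
  have ht' := one_add_mul_sq_pos hk (Ioo_subset_Icc_self ht)
  rw [landenMap, landenMap, div_eq_div_iff hs'.ne' ht'.ne'] at hst
  have hfactor : (s - t) * ((1 + k) * (1 - k * s * t)) = 0 := by linear_combination hst
  have hst1 : s * t < 1 := mul_lt_one_of_nonneg_of_lt_one_left hs.1.le hs.2 ht.2.le
  have hkst : 0 < 1 - k * s * t := by
    nlinarith [mul_pos (mul_pos hs.1 ht.1) (sub_pos.2 hk')]
  have hk1 : 0 < 1 + k := by linarith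
  simpa [sub_eq_zero, hk1.ne', hkst.ne'] using hfactor

lemma landenMap_image_Ioo (hk : -1 < k) (hk' : k < 1) :
    landenMap k '' Ioo 0 1 = Ioo 0 1 := by
  refine (mapsTo_landenMap hk hk').image_subset.antisymm ?_
  have hcont : ContinuousOn (landenMap k) (Icc 0 1) := fun t ht =>
    (hasDerivAt_landenMap hk ht).continuousAt.continuousWithinAt
  simpa [landenMap_zero, landenMap_one hk] using intermediate_value_Ioo zero_le_one hcont

lemma landenMapDeriv_mul_integrand (hk : -1 < k) (hk' : k < 1) (ht : t ∈ Ioo (0 : ℝ) 1) :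
    landenMapDeriv k t * ellipticKIntegrand (4 * k / (1 + k) ^ 2) (landenMap k t) =
      (1 + k) * ellipticKIntegrand (k ^ 2) t := by
  have hk1 : 0 < 1 + k := by linarith
  have ha := one_add_mul_sq_pos hk (Ioo_subset_Icc_self ht)
  have hb := one_sub_mul_sq_pos hk' ht
  have hc : 0 < 1 - t ^ 2 := by nlinarith [ht.1, ht.2]
  have hd : 0 < 1 - k ^ 2 * t ^ 2 := by nlinarith [ht.1, ht.2, sq_nonneg t]
  have hsqrt₁ :
      √(1 - landenMap k t ^ 2) = √(1 - t ^ 2) * √(1 - k ^ 2 * t ^ 2) / (1 + k * t ^ 2) := by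
    have : 1 - landenMap k t ^ 2 = (1 - t ^ 2) * (1 - k ^ 2 * t ^ 2) / (1 + k * t ^ 2) ^ 2 := by
      rw [landenMap]; field_simp; ring
    rw [this, sqrt_div (by positivity), sqrt_mul hc.le, sqrt_sq ha.le]
  have hsqrt₂ :
      √(1 - 4 * k / (1 + k) ^ 2 * landenMap k t ^ 2) = (1 - k * t ^ 2) / (1 + k * t ^ 2) := by
    have : 1 - 4 * k / (1 + k) ^ 2 * landenMap k t ^ 2 =
        ((1 - k * t ^ 2) / (1 + k * t ^ 2)) ^ 2 := by
      rw [landenMap]; field_simp; ring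
    rw [this, sqrt_sq (by positivity)]
  have := sqrt_pos.2 hc
  have := sqrt_pos.2 hd
  rw [ellipticKIntegrand, ellipticKIntegrand, hsqrt₁, hsqrt₂, landenMapDeriv]
  field_simp

theorem ellipticK_landen (hk : -1 < k) (hk' : k < 1) :
    ellipticK (4 * k / (1 + k) ^ 2) = (1 + k) * ellipticK (k ^ 2) := by
  have hsubst := integral_image_eq_integral_abs_deriv_smul measurableSet_Ioo
    (fun t ht => (hasDerivAt_landenMap hk (Ioo_subset_Icc_self ht)).hasDerivWithinAt)
    (injOn_landenMap hk hk') (ellipticKIntegrand (4 * k / (1 + k) ^ 2))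
  rw [landenMap_image_Ioo hk hk'] at hsubst
  rw [ellipticK_eq_integral_Ioo, ellipticK_eq_integral_Ioo, hsubst, ← integral_const_mul]
  refine setIntegral_congr_fun measurableSet_Ioo fun t ht => ?_
  rw [abs_of_pos (landenMapDeriv_pos hk hk' ht), smul_eq_mul,
    landenMapDeriv_mul_integrand hk hk' ht]

end Landen

/-- The descending Landen transformation implies: for `m ∈ (0,1)` and
`m₁ = 4√m/(1+√m)²`, one has `K(1-m)/K(m) = 2 K(1-m₁)/K(m₁)`. -/
theorem stmt19 (m : ℝ) (hm : m ∈ Set.Ioo (0 : ℝ) 1) :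
    let m₁ : ℝ := 4 * Real.sqrt m / (1 + Real.sqrt m) ^ 2
    ellipticK (1 - m) / ellipticK m = 2 * (ellipticK (1 - m₁) / ellipticK m₁) := by
  intro m₁
  set s := √m
  have hs0 : 0 < s := sqrt_pos.2 hm.1
  have hs2 : s ^ 2 = m := sq_sqrt hm.1.le
  have hs1 : s < 1 := by nlinarith [hm.2]
  have hK₁ : ellipticK m₁ = (1 + s) * ellipticK m := by
    rw [← hs2]; exact ellipticK_landen (by linarith) hs1
  set κ := (1 - s) / (1 + s) with hκ_def
  have hκ₀ : -1 < κ := by rw [hκ_def, lt_div_iff₀ (by linarith)]; linarith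
  have hκ₁ : κ < 1 := by rw [hκ_def, div_lt_one (by linarith)]; linarith
  have hK₂ := ellipticK_landen hκ₀ hκ₁
  have e₁ : 4 * κ / (1 + κ) ^ 2 = 1 - m := by rw [hκ_def, ← hs2]; field_simp; ring
  have e₂ : κ ^ 2 = 1 - m₁ := by
    rw [hκ_def, show m₁ = 4 * s / (1 + s) ^ 2 from rfl]; field_simp; ring
  have e₃ : 1 + κ = 2 / (1 + s) := by rw [hκ_def]; field_simp; ring
  rw [e₁, e₂, e₃] at hK₂
  rw [hK₂, hK₁]
  rcases eq_or_ne (ellipticK m) 0 with h | h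
  · simp [h]
  · field_simp
end
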